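/- arXiv:2310.14085 — 5 statements merged into one kernel-verified Lean document; each statement's English description precedes it below -/
import Mathlib

section
/- Let f : X → ℝ be differentiable on a convex set X ⊆ ℝ^d with ‖∇f(x)‖ ≤ G and ‖x - x'‖ ≤ D for all x, x' ∈ X, and suppose f is α-exp-concave (i.e., e^{-αf} is concave on X). Then for all x, x' ∈ X: ⟨x' - x, ∇f(x') - ∇f(x)⟩ ≥ (1/4)·min{1/(4GD), α}·⟨x' - x, (∇f(x')∇f(x')^⊤ + ∇f(x)∇f(x)^⊤)(x' - x)⟩. -/
open scoped RealInnerProductSpace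

lemma aux_exp_ineq (z : ℝ) (hz : |z| ≤ 1/4) : 1 - z ≤ Real.exp (-z - z^2/4) := by
  obtain ⟨h1, h2⟩ := abs_le.mp hz
  set u : ℝ := -z - z^2/4 with hu
  have h3 : (0:ℝ) ≤ 1 + u/3 := by rw [hu]; nlinarith
  have h4 : 1 + u/3 ≤ Real.exp (u/3) := by linarith [Real.add_one_le_exp (u/3)]
  have h5 : (1 + u/3)^3 ≤ Real.exp (u/3)^3 := pow_le_pow_left₀ h3 h4 3
  have h6 : Real.exp (u/3)^3 = Real.exp u := by
    rw [← Real.exp_nat_mul]; push_cast; ring_nf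
  have h7 : 1 - z ≤ (1 + u/3)^3 := by rw [hu]; nlinarith [sq_nonneg z, sq_nonneg (z^2), sq_nonneg (z*(1+z/4)), sq_nonneg (z^2*(4+z))]
  calc 1 - z ≤ (1 + u/3)^3 := h7
    _ ≤ Real.exp (u/3)^3 := h5
    _ = Real.exp u := h6

lemma aux_exp_concave_mono {E : Type*} [NormedAddCommGroup E] [InnerProductSpace ℝ E]
    {X : Set E} {f : E → ℝ} {α c : ℝ} (hα : 0 < α) (hc : 0 < c) (hcα : c ≤ α)
    (hec : ConcaveOn ℝ X fun x => Real.exp (-α * f x)) :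
    ConcaveOn ℝ X fun x => Real.exp (-c * f x) := by
  have hp0 : 0 < c / α := div_pos hc hα
  have hp1 : c / α ≤ 1 := (div_le_one hα).mpr hcα
  have key : ∀ y : E, Real.exp (-(c * f y)) = (Real.exp (-(α * f y))) ^ (c / α) := by
    intro y
    rw [← Real.exp_mul]
    congr 1
    field_simp
  refine ⟨hec.1, fun a ha b hb w w' hw hw' hsum => ?_⟩
  simp only [smul_eq_mul, neg_mul]
  rw [key, key, key]
  set A := Real.exp (-(α * f a))
  set B := Real.exp (-(α * f b))
  have hA : (0:ℝ) ≤ A := (Real.exp_pos _).le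
  have hB : (0:ℝ) ≤ B := (Real.exp_pos _).le
  have hconc := (Real.concaveOn_rpow hp0.le hp1).2 (Set.mem_Ici.mpr hA) (Set.mem_Ici.mpr hB) hw hw' hsum
  simp only [smul_eq_mul] at hconc
  have hmono : (w * A + w' * B) ^ (c/α) ≤ (Real.exp (-(α * f (w • a + w' • b)))) ^ (c/α) := by
    apply Real.rpow_le_rpow (by positivity) _ hp0.le
    simpa [smul_eq_mul, neg_mul] using hec.2 ha hb hw hw' hsum
  exact hconc.trans hmono

lemma aux_grad_exp {E : Type*} [NormedAddCommGroup E] [InnerProductSpace ℝ E] [CompleteSpace E]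
    {f : E → ℝ} {gx : E} {x : E} (hf : HasGradientAt f gx x) (c : ℝ) :
    HasGradientAt (fun y => Real.exp (-c * f y)) ((-c * Real.exp (-c * f x)) • gx) x := by
  rw [hasGradientAt_iff_hasFDerivAt] at hf ⊢
  have h1 : HasFDerivAt (fun y => -c * f y) ((-c) • (InnerProductSpace.toDual ℝ E gx : E →L[ℝ] ℝ)) x :=
    hf.const_mul (-c)
  have h2 := (Real.hasDerivAt_exp (-c * f x)).comp_hasFDerivAt x h1
  refine h2.congr_fderiv ?_
  ext v
  simp [InnerProductSpace.toDual_apply_apply, real_inner_smul_left]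
  ring

lemma aux_concave_grad {E : Type*} [NormedAddCommGroup E] [InnerProductSpace ℝ E] [CompleteSpace E]
    {X : Set E} {h : E → ℝ} {Gx x x' : E} (hX : Convex ℝ X)
    (hconc : ConcaveOn ℝ X h) (hx : x ∈ X) (hx' : x' ∈ X)
    (hgrad : HasGradientAt h Gx x) :
    h x' ≤ h x + ⟪Gx, x' - x⟫ := by
  set v := x' - x with hv
  set φ : ℝ → ℝ := fun t => h (x + t • v) with hφ
  have hcurve : HasDerivAt (fun t : ℝ => x + t • v) v 0 := by
    simpa using ((hasDerivAt_id (0:ℝ)).smul_const v).const_add x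
  have hφd : HasDerivAt φ ⟪Gx, v⟫ 0 := by
    have hx0 : HasFDerivAt h ((InnerProductSpace.toDual ℝ E) Gx) (x + (0:ℝ) • v) := by
      simpa using hgrad.hasFDerivAt
    have := hx0.comp_hasDerivAt 0 hcurve
    simp [InnerProductSpace.toDual_apply_apply] at this
    exact this
  have hφ0 : φ 0 = h x := by simp [hφ]
  have hφ1 : φ 1 = h x' := by simp [hφ, hv]
  have hslope : ∀ t ∈ Set.Ioc (0:ℝ) 1, φ 1 - φ 0 ≤ slope φ 0 t := by
    intro t ht
    obtain ⟨ht0, ht1⟩ := ht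
    have hmem : x + t • v ∈ X := by
      have : x + t • v = (1 - t) • x + t • x' := by
        rw [hv]; module
      rw [this]
      exact hconc.1 hx hx' (by linarith) ht0.le (by ring)
    have hcc := hconc.2 hx hx' (by linarith : (0:ℝ) ≤ 1 - t) ht0.le (by ring)
    have hφt : (1 - t) * h x + t * h x' ≤ φ t := by
      simpa [hφ, smul_eq_mul, (by rw [hv]; module : x + t • v = (1 - t) • x + t • x')] using hcc
    rw [slope_def_field, sub_zero]
    rw [le_div_iff₀ ht0]
    nlinarith [hφt]
  have htends : Filter.Tendsto (slope φ 0) (nhdsWithin 0 (Set.Ioi 0)) (nhds ⟪Gx, v⟫) := by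
    refine (hasDerivAt_iff_tendsto_slope.mp hφd).mono_left (nhdsWithin_mono 0 ?_)
    intro y hy
    exact ne_of_gt hy
  have hle : φ 1 - φ 0 ≤ ⟪Gx, v⟫ := by
    refine ge_of_tendsto htends ?_
    filter_upwards [Ioc_mem_nhdsGT_of_mem (Set.mem_Ico.mpr ⟨le_refl 0, zero_lt_one⟩)] with t ht
    exact hslope t ht
  rw [hφ0, hφ1] at hle
  linarith

lemma aux_key {d : ℕ} (X : Set (EuclideanSpace ℝ (Fin d))) (hX : Convex ℝ X)
    (f : EuclideanSpace ℝ (Fin d) → ℝ) (g : EuclideanSpace ℝ (Fin d) → EuclideanSpace ℝ (Fin d))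
    (hgrad : ∀ x ∈ X, HasGradientAt f (g x) x)
    (α G D : ℝ) (hα : 0 < α) (hG : 0 < G) (hD : 0 < D)
    (hGbound : ∀ x ∈ X, ‖g x‖ ≤ G)
    (hDbound : ∀ x ∈ X, ∀ x' ∈ X, ‖x - x'‖ ≤ D)
    (hec : ConcaveOn ℝ X fun x => Real.exp (-α * f x)) :
    ∀ x ∈ X, ∀ x' ∈ X,
      f x + ⟪g x, x' - x⟫ + (min (1/(4*G*D)) α / 4) * ⟪g x, x' - x⟫^2 ≤ f x' := by
  intro x hx x' hx'
  set c := min (1/(4*G*D)) α with hcdef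
  have hc : 0 < c := lt_min (by positivity) hα
  have hcα : c ≤ α := min_le_right _ _
  set s := ⟪g x, x' - x⟫ with hsdef
  have hs : |s| ≤ G * D := by
    calc |s| ≤ ‖g x‖ * ‖x' - x‖ := abs_real_inner_le_norm _ _
      _ ≤ G * D := mul_le_mul (hGbound x hx) (by simpa [norm_sub_rev] using hDbound x' hx' x hx)
          (norm_nonneg _) hG.le
  have hz : |c * s| ≤ 1/4 := by
    rw [abs_mul, abs_of_pos hc]
    have h1 : c ≤ 1/(4*G*D) := min_le_left _ _
    calc c * |s| ≤ (1/(4*G*D)) * (G*D) := mul_le_mul h1 hs (abs_nonneg _) (by positivity)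
      _ = 1/4 := by field_simp
  have hconc := aux_exp_concave_mono hα hc hcα hec
  have hgradc := aux_grad_exp (hgrad x hx) c
  have hle := aux_concave_grad hX hconc hx hx' hgradc
  rw [real_inner_smul_left] at hle
  have hexp := aux_exp_ineq (c*s) hz
  have key2 : Real.exp (-c * f x') ≤ Real.exp (-c * f x - c*s - (c*s)^2/4) := by
    calc Real.exp (-c * f x') ≤ Real.exp (-c * f x) * (1 - c*s) := by
          have : Real.exp (-c * f x) + (-c * Real.exp (-c * f x)) * s
              = Real.exp (-c * f x) * (1 - c*s) := by ring
          rw [← hsdef] at hle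
          linarith
      _ ≤ Real.exp (-c * f x) * Real.exp (-(c*s) - (c*s)^2/4) :=
          mul_le_mul_of_nonneg_left hexp (Real.exp_pos _).le
      _ = Real.exp (-c * f x - c*s - (c*s)^2/4) := by rw [← Real.exp_add]; ring_nf
  have key3 : -c * f x' ≤ -c * f x - c*s - (c*s)^2/4 := Real.exp_le_exp.mp key2
  nlinarith [key3, hc, mul_pos hc hc]

/-- If `f` is differentiable and `α`-exp-concave on a convex set `X`
with gradient bound `G` and diameter bound `D`, then for all `x, x' ∈ X`,
`⟨x'-x, ∇f(x')-∇f(x)⟩ ≥ (1/4)·min{1/(4GD), α}·(⟨∇f(x'), x'-x⟩² + ⟨∇f(x), x'-x⟩²)`. -/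
theorem stmt_4 {d : ℕ} (X : Set (EuclideanSpace ℝ (Fin d))) (hX : Convex ℝ X)
    (f : EuclideanSpace ℝ (Fin d) → ℝ) (g : EuclideanSpace ℝ (Fin d) → EuclideanSpace ℝ (Fin d))
    (hgrad : ∀ x ∈ X, HasGradientAt f (g x) x)
    (α G D : ℝ) (hα : 0 < α) (hG : 0 < G) (hD : 0 < D)
    (hGbound : ∀ x ∈ X, ‖g x‖ ≤ G)
    (hDbound : ∀ x ∈ X, ∀ x' ∈ X, ‖x - x'‖ ≤ D)
    (hec : ConcaveOn ℝ X fun x => Real.exp (-α * f x)) :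
    ∀ x ∈ X, ∀ x' ∈ X,
      ⟪x' - x, g x' - g x⟫ ≥
        (1 / 4) * min (1 / (4 * G * D)) α *
          (⟪g x', x' - x⟫ ^ 2 + ⟪g x, x' - x⟫ ^ 2) := by
  intro x hx x' hx'
  have h1 := aux_key X hX f g hgrad α G D hα hG hD hGbound hDbound hec x hx x' hx'
  have h2 := aux_key X hX f g hgrad α G D hα hG hD hGbound hDbound hec x' hx' x hx
  have e1 : ⟪g x', x - x'⟫ = -⟪g x', x' - x⟫ := by
    rw [← inner_neg_right]; congr 1; abel
  have e2 : ⟪x' - x, g x' - g x⟫ = ⟪g x', x' - x⟫ - ⟪g x, x' - x⟫ := by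
    rw [inner_sub_right, real_inner_comm (x' - x) (g x'), real_inner_comm (x' - x) (g x)]
  rw [e1] at h2
  rw [e2]
  have e3 : (-⟪g x', x' - x⟫)^2 = ⟪g x', x' - x⟫^2 := neg_sq _
  rw [e3] at h2
  linarith
end

section
/- Every β-strongly monotone continuous game with gradient profile bounded by G (i.e., ‖v(x)‖ ≤ G for all x ∈ X) is α-exp-concave for every α ≤ 2β/G², where the exp-concave game condition is ⟨x'-x, v(x')-v(x)⟩ ≥ (1/4)min{1/(4GD), α}·∑_{i=1}^N (x'_i - x_i)^⊤(v_i(x')v_i(x')^⊤ + v_i(x)v_i(x)^⊤)(x'_i - x_i). -/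
open scoped RealInnerProductSpace

/-- Every `β`-strongly monotone game with gradient profile bounded
by `G` is `α`-exp-concave for every `0 < α ≤ 2β/G²`:
`⟨x'-x, v(x')-v(x)⟩ ≥ (1/4)·min{1/(4GD), α}·∑ᵢ (⟨vᵢ(x'), x'ᵢ-xᵢ⟩² + ⟨vᵢ(x), x'ᵢ-xᵢ⟩²)`. -/
theorem stmt_5 {N : ℕ} {d : Fin N → ℕ}
    (X : Set (PiLp 2 fun i : Fin N => EuclideanSpace ℝ (Fin (d i))))
    (v : (PiLp 2 fun i : Fin N => EuclideanSpace ℝ (Fin (d i))) →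
         PiLp 2 fun i : Fin N => EuclideanSpace ℝ (Fin (d i)))
    (β G D : ℝ) (hβ : 0 < β) (hG : 0 < G) (hD : 0 < D)
    (hmono : ∀ x ∈ X, ∀ x' ∈ X, ⟪x' - x, v x' - v x⟫ ≥ β * ‖x' - x‖ ^ 2)
    (hGbound : ∀ x ∈ X, ‖v x‖ ≤ G)
    (hDbound : ∀ x ∈ X, ∀ x' ∈ X, ‖x - x'‖ ≤ D)
    (α : ℝ) (hα : 0 < α) (hαβ : α ≤ 2 * β / G ^ 2) :
    ∀ x ∈ X, ∀ x' ∈ X,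
      ⟪x' - x, v x' - v x⟫ ≥
        (1 / 4) * min (1 / (4 * G * D)) α *
          ∑ i, (⟪v x' i, x' i - x i⟫ ^ 2 + ⟪v x i, x' i - x i⟫ ^ 2) := by
  intro x hx x' hx'
  have hnormsq : ∀ z : PiLp 2 fun i : Fin N => EuclideanSpace ℝ (Fin (d i)),
      ‖z‖ ^ 2 = ∑ i, ‖z i‖ ^ 2 := fun z => by
    rw [PiLp.norm_sq_eq_of_L2]
  have happly : ∀ z ∈ X, ∀ i, ‖v z i‖ ≤ G := by
    intro z hz i
    have h1 : ‖v z i‖ ^ 2 ≤ ‖v z‖ ^ 2 := by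
      rw [hnormsq]
      exact Finset.single_le_sum (f := fun j => ‖v z j‖ ^ 2)
        (fun j _ => sq_nonneg _) (Finset.mem_univ i)
    have := (hGbound z hz)
    nlinarith [norm_nonneg (v z i), norm_nonneg (v z)]
  -- bound each term
  have hterm : ∀ z ∈ X, ∀ i, ⟪v z i, x' i - x i⟫ ^ 2 ≤ G ^ 2 * ‖x' i - x i‖ ^ 2 := by
    intro z hz i
    have h1 := abs_real_inner_le_norm (v z i) (x' i - x i)
    have h2 := happly z hz i
    have h3 : |⟪v z i, x' i - x i⟫| ≤ G * ‖x' i - x i‖ :=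
      h1.trans (mul_le_mul_of_nonneg_right h2 (norm_nonneg _))
    rw [← sq_abs]
    nlinarith [abs_nonneg (⟪v z i, x' i - x i⟫), norm_nonneg (x' i - x i)]
  have hS : (∑ i, (⟪v x' i, x' i - x i⟫ ^ 2 + ⟪v x i, x' i - x i⟫ ^ 2)) ≤
      2 * G ^ 2 * ‖x' - x‖ ^ 2 := by
    have hsub : ∀ i, (x' - x) i = x' i - x i := fun i => rfl
    calc (∑ i, (⟪v x' i, x' i - x i⟫ ^ 2 + ⟪v x i, x' i - x i⟫ ^ 2))
        ≤ ∑ i, (2 * G ^ 2 * ‖x' i - x i‖ ^ 2) := by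
          apply Finset.sum_le_sum
          intro i _
          have := hterm x' hx' i
          have := hterm x hx i
          linarith
      _ = 2 * G ^ 2 * ∑ i, ‖(x' - x) i‖ ^ 2 := by
          rw [Finset.mul_sum]
          simp only [PiLp.sub_apply]
      _ = 2 * G ^ 2 * ‖x' - x‖ ^ 2 := by rw [← hnormsq]
  have hSnonneg : (0:ℝ) ≤ ∑ i, (⟪v x' i, x' i - x i⟫ ^ 2 + ⟪v x i, x' i - x i⟫ ^ 2) :=
    Finset.sum_nonneg fun i _ => by positivity
  have hminpos : 0 < min (1 / (4 * G * D)) α := lt_min (by positivity) hα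
  have hminα : min (1 / (4 * G * D)) α ≤ α := min_le_right _ _
  have hmain := hmono x hx x' hx'
  have hαG : α * G ^ 2 ≤ 2 * β := by
    rw [le_div_iff₀ (by positivity)] at hαβ
    linarith
  have h1 : (1 / 4) * min (1 / (4 * G * D)) α *
      (∑ i, (⟪v x' i, x' i - x i⟫ ^ 2 + ⟪v x i, x' i - x i⟫ ^ 2)) ≤
      (1 / 4) * α * (2 * G ^ 2 * ‖x' - x‖ ^ 2) := by
    have := mul_le_mul hminα hS hSnonneg hα.le
    nlinarith [hminpos.le]
  have h2 : (1 / 4) * α * (2 * G ^ 2 * ‖x' - x‖ ^ 2) ≤ β * ‖x' - x‖ ^ 2 := by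
    nlinarith [sq_nonneg ‖x' - x‖]
  linarith
end

section
/- Let x ∈ ℝ^N with x_i ≥ 0 and define s = ∑_{i=1}^N x_i. If s > 0, then s·(I_N + 1_N 1_N^⊤) - x 1_N^⊤ - 1_N x^⊤ is positive semidefinite. -/
/-- For `x ∈ ℝ^N` with nonnegative entries and `s = ∑ xᵢ > 0`,
the matrix `s(I + 1 1ᵀ) - x 1ᵀ - 1 xᵀ` is positive semidefinite. -/
theorem stmt_7 {N : ℕ} (x : Fin N → ℝ) (hx : ∀ i, 0 ≤ x i)
    (hs : 0 < ∑ i, x i) :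
    Matrix.PosSemidef
      ((∑ i, x i) • ((1 : Matrix (Fin N) (Fin N) ℝ)
          + Matrix.vecMulVec (fun _ => 1) (fun _ => 1))
        - Matrix.vecMulVec x (fun _ => 1) - Matrix.vecMulVec (fun _ => 1) x) := by
  set M := ((∑ i, x i) • ((1 : Matrix (Fin N) (Fin N) ℝ)
          + Matrix.vecMulVec (fun _ => 1) (fun _ => 1))
        - Matrix.vecMulVec x (fun _ => 1) - Matrix.vecMulVec (fun _ => 1) x) with hMdef
  set s := ∑ i, x i with hsdef
  have hM : ∀ i j, M i j = s * ((if i = j then 1 else 0) + 1) - x i - x j := by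
    intro i j
    simp [hMdef, Matrix.sub_apply, Matrix.smul_apply, Matrix.add_apply,
      Matrix.vecMulVec_apply, Matrix.one_apply]
    by_cases h : i = j <;> simp [h] <;> ring
  rw [Matrix.posSemidef_iff_dotProduct_mulVec]
  constructor
  · ext i j
    simp only [Matrix.conjTranspose_apply, star_trivial, hM]
    by_cases h : i = j <;> simp [h, eq_comm] <;> ring
  · intro v
    set t := ∑ j, v j with ht
    set p := ∑ j, x j * v j with hp
    set S := ∑ j, v j ^ 2 with hS
    have hmv : M.mulVec v = fun i => s * v i + s * t - x i * t - p := by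
      funext i
      simp only [Matrix.mulVec, dotProduct, hM]
      rw [Finset.sum_congr rfl (fun j _ => by by_cases h : i = j <;> simp [h] <;> ring :
        ∀ j ∈ Finset.univ, (s * ((if i = j then 1 else 0) + 1) - x i - x j) * v j
          = (if i = j then s * v j else 0) + s * v j - x i * v j - x j * v j)]
      simp [Finset.sum_sub_distrib, Finset.sum_add_distrib, ← Finset.mul_sum, ht, hp]
    have key : dotProduct (star v) (M.mulVec v) = s * S + s * t ^ 2 - 2 * p * t := by
      simp only [hmv, dotProduct, star_trivial, Pi.star_apply]
      rw [Finset.sum_congr rfl (fun j _ => by ring :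
        ∀ j ∈ Finset.univ, v j * (s * v j + s * t - x j * t - p)
          = s * v j ^ 2 + s * t * v j - t * (x j * v j) - p * v j)]
      simp [Finset.sum_sub_distrib, Finset.sum_add_distrib, ← Finset.mul_sum, ht, hp, hS]
      ring
    rw [key]
    have h2 : s * S + s * t ^ 2 - 2 * p * t = ∑ i, x i * (S + t ^ 2 - 2 * v i * t) := by
      rw [Finset.sum_congr rfl (fun i _ => by ring :
        ∀ i ∈ Finset.univ, x i * (S + t ^ 2 - 2 * v i * t)
          = x i * (S + t ^ 2) - x i * v i * (2 * t))]
      rw [Finset.sum_sub_distrib, ← Finset.sum_mul, ← Finset.sum_mul, ← hsdef, ← hp]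
      ring
    rw [h2]
    apply Finset.sum_nonneg
    intro i _
    have hSi : v i ^ 2 ≤ S := by
      exact Finset.single_le_sum (fun j _ => sq_nonneg (v j)) (Finset.mem_univ i)
    have : (0:ℝ) ≤ (v i - t) ^ 2 := sq_nonneg _
    nlinarith [hx i, mul_le_mul_of_nonneg_left hSi (hx i)]
end

section
/- In the multi-retailer newsvendor game where retailer i's marginal cost is v_i(x) = p·(1 - (1 + ∑_{j≠i} x_j)/(1 + ∑_{k=1}^N x_k)²) - p + c_i on X = ∏_{i=1}^N [0, x̄_i], the game is β-strongly monotone with β = p/(1 + ∑_{k=1}^N x̄_k)³; that is, ⟨x'-x, v(x')-v(x)⟩ ≥ β‖x'-x‖² for all x, x' ∈ X. -/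
/-- Key positivity of the symmetrized Jacobian quadratic form, in summed form. -/
lemma key_ineq {N : ℕ} (y dd : Fin N → ℝ) (hy : ∀ i, 0 ≤ y i) :
    (1 + ∑ i, y i) * ((∑ i, dd i ^ 2) + (∑ i, dd i) ^ 2)
      - 2 * (∑ i, dd i) * (∑ i, y i * dd i)
      ≥ (∑ i, dd i ^ 2) + (∑ i, dd i) ^ 2 := by
  have hterm : ∀ i ∈ Finset.univ,
      0 ≤ y i * ((∑ j, dd j ^ 2) + (∑ j, dd j) ^ 2 - 2 * (∑ j, dd j) * dd i) := by
    intro i _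
    refine mul_nonneg (hy i) ?_
    have h1 : dd i ^ 2 ≤ ∑ j, dd j ^ 2 :=
      Finset.single_le_sum (f := fun j => dd j ^ 2) (fun j _ => sq_nonneg (dd j))
        (Finset.mem_univ i)
    nlinarith [sq_nonneg ((∑ j, dd j) - dd i)]
  have hsum : 0 ≤ ∑ i, y i * ((∑ j, dd j ^ 2) + (∑ j, dd j) ^ 2 - 2 * (∑ j, dd j) * dd i) :=
    Finset.sum_nonneg hterm
  have expand : ∑ i, y i * ((∑ j, dd j ^ 2) + (∑ j, dd j) ^ 2 - 2 * (∑ j, dd j) * dd i)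
      = (∑ i, y i) * ((∑ j, dd j ^ 2) + (∑ j, dd j) ^ 2)
        - 2 * (∑ j, dd j) * (∑ i, y i * dd i) := by
    have h1 : (∑ i, y i) * ((∑ j, dd j ^ 2) + (∑ j, dd j) ^ 2)
        = ∑ i, y i * ((∑ j, dd j ^ 2) + (∑ j, dd j) ^ 2) := Finset.sum_mul ..
    have h2 : 2 * (∑ j, dd j) * (∑ i, y i * dd i)
        = ∑ i, 2 * (∑ j, dd j) * (y i * dd i) := Finset.mul_sum ..
    rw [h1, h2, ← Finset.sum_sub_distrib]
    exact Finset.sum_congr rfl fun i _ => by ring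
  linarith [hsum, expand]

/-- Scalar endgame inequality. -/
lemma final_ineq (p s s' σ q D a : ℝ) (hp : 0 < p) (hs : 1 ≤ s) (hs' : 1 ≤ s')
    (hsσ : s ≤ σ) (hs'σ : s' ≤ σ) (hq : 0 ≤ q) (hD : s' = s + D)
    (K0 : s * (q + D ^ 2) - 2 * D * a ≥ q + D ^ 2)
    (K1 : s' * (q + D ^ 2) - 2 * D * (a + q) ≥ q + D ^ 2) :
    p * D / s - p * D / s' + p * (a + q) / s' ^ 2 - p * a / s ^ 2 ≥ p / σ ^ 3 * q := by
  subst hD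
  have hs0 : 0 < s := by linarith
  have hs'0 : 0 < s + D := by linarith
  have hσ0 : 0 < σ := by linarith
  set N0 : ℝ := s * (q + D ^ 2) - 2 * D * a with hN0
  set N1 : ℝ := (s + D) * (q + D ^ 2) - 2 * D * (a + q) with hN1
  have hE : p * D / s - p * D / (s + D) + p * (a + q) / (s + D) ^ 2 - p * a / s ^ 2
      = p * (N0 * (s + D) + N1 * s) / (2 * s ^ 2 * (s + D) ^ 2) := by
    rw [hN0, hN1]
    field_simp
    ring
  rw [hE, ge_iff_le, div_mul_eq_mul_div, div_le_div_iff₀ (by positivity) (by positivity)]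
  have hss : s ^ 2 ≤ σ ^ 2 := by nlinarith
  have hs's : (s + D) ^ 2 ≤ σ ^ 2 := by nlinarith
  have h1 : s ^ 2 * (s + D) ^ 2 ≤ σ ^ 3 * (s + D) := by
    calc s ^ 2 * (s + D) ^ 2 ≤ σ ^ 2 * (s + D) ^ 2 :=
          mul_le_mul_of_nonneg_right hss (sq_nonneg _)
      _ = σ ^ 2 * (s + D) * (s + D) := by ring
      _ ≤ σ ^ 2 * (s + D) * σ :=
          mul_le_mul_of_nonneg_left hs'σ (by positivity)
      _ = σ ^ 3 * (s + D) := by ring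
  have h2 : s ^ 2 * (s + D) ^ 2 ≤ σ ^ 3 * s := by
    calc s ^ 2 * (s + D) ^ 2 ≤ s ^ 2 * σ ^ 2 :=
          mul_le_mul_of_nonneg_left hs's (sq_nonneg _)
      _ = σ ^ 2 * s * s := by ring
      _ ≤ σ ^ 2 * s * σ := mul_le_mul_of_nonneg_left hsσ (by positivity)
      _ = σ ^ 3 * s := by ring
  have hqD : q ≤ q + D ^ 2 := by nlinarith [sq_nonneg D]
  have hb0 : q * (s ^ 2 * (s + D) ^ 2) ≤ N0 * (s + D) * σ ^ 3 := by
    calc q * (s ^ 2 * (s + D) ^ 2) ≤ q * (σ ^ 3 * (s + D)) :=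
          mul_le_mul_of_nonneg_left h1 hq
      _ ≤ (q + D ^ 2) * (σ ^ 3 * (s + D)) :=
          mul_le_mul_of_nonneg_right hqD (by positivity)
      _ ≤ N0 * (σ ^ 3 * (s + D)) :=
          mul_le_mul_of_nonneg_right K0 (by positivity)
      _ = N0 * (s + D) * σ ^ 3 := by ring
  have hb1 : q * (s ^ 2 * (s + D) ^ 2) ≤ N1 * s * σ ^ 3 := by
    calc q * (s ^ 2 * (s + D) ^ 2) ≤ q * (σ ^ 3 * s) :=
          mul_le_mul_of_nonneg_left h2 hq
      _ ≤ (q + D ^ 2) * (σ ^ 3 * s) :=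
          mul_le_mul_of_nonneg_right hqD (by positivity)
      _ ≤ N1 * (σ ^ 3 * s) :=
          mul_le_mul_of_nonneg_right K1 (by positivity)
      _ = N1 * s * σ ^ 3 := by ring
  have hadd := add_le_add hb0 hb1
  nlinarith [mul_le_mul_of_nonneg_left hadd hp.le]

/-- In the multi-retailer newsvendor game with marginal costs
`vᵢ(x) = p(1 - (1 + ∑_{j≠i} xⱼ)/(1 + ∑ₖ xₖ)²) - p + cᵢ` on `∏ᵢ [0, x̄ᵢ]`, the
game is `β`-strongly monotone with `β = p/(1 + ∑ₖ x̄ₖ)³`. -/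
theorem stmt_8 {N : ℕ} (p : ℝ) (hp : 0 < p) (c : Fin N → ℝ) (hc : ∀ i, 0 < c i)
    (xbar : Fin N → ℝ) (hxbar : ∀ i, 0 < xbar i)
    (v : (Fin N → ℝ) → Fin N → ℝ)
    (hv : ∀ x i, v x i =
      p * (1 - (1 + ∑ j ∈ Finset.univ.erase i, x j) / (1 + ∑ k, x k) ^ 2) - p + c i) :
    ∀ x : Fin N → ℝ, (∀ i, x i ∈ Set.Icc 0 (xbar i)) →
    ∀ x' : Fin N → ℝ, (∀ i, x' i ∈ Set.Icc 0 (xbar i)) →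
      ∑ i, (x' i - x i) * (v x' i - v x i) ≥
        p / (1 + ∑ k, xbar k) ^ 3 * ∑ i, (x' i - x i) ^ 2 := by
  intro x hx x' hx'
  set d : Fin N → ℝ := fun i => x' i - x i with hd
  have hx0 : ∀ i, 0 ≤ x i := fun i => (hx i).1
  have hx'0 : ∀ i, 0 ≤ x' i := fun i => (hx' i).1
  have hs1 : (1:ℝ) ≤ 1 + ∑ k, x k := by
    have : (0:ℝ) ≤ ∑ k, x k := Finset.sum_nonneg fun i _ => hx0 i
    linarith
  have hs'1 : (1:ℝ) ≤ 1 + ∑ k, x' k := by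
    have : (0:ℝ) ≤ ∑ k, x' k := Finset.sum_nonneg fun i _ => hx'0 i
    linarith
  have hsσ : 1 + ∑ k, x k ≤ 1 + ∑ k, xbar k := by
    have : ∑ k, x k ≤ ∑ k, xbar k := Finset.sum_le_sum fun i _ => (hx i).2
    linarith
  have hs'σ : 1 + ∑ k, x' k ≤ 1 + ∑ k, xbar k := by
    have : ∑ k, x' k ≤ ∑ k, xbar k := Finset.sum_le_sum fun i _ => (hx' i).2
    linarith
  have hs0 : (1 + ∑ k, x k) ≠ 0 := by linarith
  have hs'0 : (1 + ∑ k, x' k) ≠ 0 := by linarith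
  -- rewrite ∑ d * v z for a generic z
  have hvsum : ∀ z : Fin N → ℝ, (1 + ∑ k, z k) ≠ 0 →
      ∑ i, d i * v z i = (∑ i, d i * c i) - p * (∑ i, d i) / (1 + ∑ k, z k)
        + p * (∑ i, z i * d i) / (1 + ∑ k, z k) ^ 2 := by
    intro z hz
    have hterm : ∀ i ∈ Finset.univ, d i * v z i
        = d i * c i - p * d i / (1 + ∑ k, z k) + p * (z i * d i) / (1 + ∑ k, z k) ^ 2 := by
      intro i _
      rw [hv, Finset.sum_erase_eq_sub (Finset.mem_univ i)]
      field_simp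
      ring
    rw [Finset.sum_congr rfl hterm]
    rw [Finset.sum_add_distrib, Finset.sum_sub_distrib, ← Finset.sum_div, ← Finset.sum_div,
      ← Finset.mul_sum, ← Finset.mul_sum]
  -- main rewriting of the LHS
  have hLHS : ∑ i, (x' i - x i) * (v x' i - v x i)
      = p * (∑ i, d i) / (1 + ∑ k, x k) - p * (∑ i, d i) / (1 + ∑ k, x' k)
        + p * (∑ i, x' i * d i) / (1 + ∑ k, x' k) ^ 2
        - p * (∑ i, x i * d i) / (1 + ∑ k, x k) ^ 2 := by
    have hsplit : ∑ i, (x' i - x i) * (v x' i - v x i)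
        = (∑ i, d i * v x' i) - ∑ i, d i * v x i := by
      rw [← Finset.sum_sub_distrib]
      exact Finset.sum_congr rfl fun i _ => by simp only [hd]; ring
    rw [hsplit, hvsum x' hs'0, hvsum x hs0]
    ring
  rw [hLHS]
  have hsum' : 1 + ∑ k, x' k = (1 + ∑ k, x k) + ∑ i, d i := by
    have : ∑ k, x' k = ∑ k, (x k + d k) :=
      Finset.sum_congr rfl fun i _ => by simp only [hd]; ring
    rw [this, Finset.sum_add_distrib]; ring
  have hq : ∑ i, x' i * d i = (∑ i, x i * d i) + ∑ i, (x' i - x i) ^ 2 := by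
    rw [← Finset.sum_add_distrib]
    exact Finset.sum_congr rfl fun i _ => by simp only [hd]; ring
  have hq2 : ∑ i, d i ^ 2 = ∑ i, (x' i - x i) ^ 2 := rfl
  have K0 := key_ineq x d hx0
  have K1 := key_ineq x' d hx'0
  rw [hq]
  have hfin := final_ineq p (1 + ∑ k, x k) (1 + ∑ k, x' k) (1 + ∑ k, xbar k)
    (∑ i, (x' i - x i) ^ 2) (∑ i, d i) (∑ i, x i * d i) hp hs1 hs'1 hsσ hs'σ
    (Finset.sum_nonneg fun i _ => sq_nonneg _)
    hsum'
    (by rw [← hq2]; linarith [K0])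
    (by rw [← hq2, ← hq]; linarith [K1])
  linarith [hfin]
end

section
/- (Single-step exp-concave descent inequality.) Let f be α-exp-concave and differentiable on a convex set X with ‖∇f(x)‖ ≤ G and diameter D, let A, A' be symmetric positive definite with A' = A + ∇f(x^t)∇f(x^t)^⊤, and let x^{t+1} = argmin_{x∈X}{⟨x-x^t, ∇f(x^t)⟩ + (η/2)(x-x^t)^⊤A'(x-x^t)} with η = (1/2)min{1/(4GD), α}. Then for all x ∈ X: f(x^t) - f(x) ≤ (η/2)(x^t-x)^⊤A(x^t-x) - (η/2)(x^{t+1}-x)^⊤A'(x^{t+1}-x) + (1/(2η))∇f(x^t)^⊤(A')^{-1}∇f(x^t). -/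
open scoped RealInnerProductSpace

lemma aux_log18 {z : ℝ} (hz : |z| ≤ 1/4) : z + z^2/4 ≤ -Real.log (1 - z) := by
  have hz1 : z ≤ 1/4 := (abs_le.1 hz).2
  have hz2 : -(1/4) ≤ z := (abs_le.1 hz).1
  have hpos : (0:ℝ) < 1 - z := by linarith
  have key : 1 - z ≤ Real.exp (-(z + z^2/4)) := by
    rcases le_or_gt z 0 with hle | hgt
    · have hs : 0 ≤ -(z + z^2/4) := by nlinarith
      have h1 := Real.sum_le_exp_of_nonneg hs 3
      simp [Finset.sum_range_succ] at h1
      have heq : -(z^2/4) + -z = -(z + z^2/4) := by ring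
      rw [heq] at h1
      nlinarith [h1, mul_nonneg (by linarith : (0:ℝ) ≤ z + 1/4) (sq_nonneg z)]
    · have hx0 : 0 ≤ z + z^2/4 := by nlinarith
      have hx1 : z + z^2/4 ≤ 1 := by nlinarith
      have hb := Real.exp_bound' hx0 hx1 (n := 3) (by norm_num)
      norm_num [Finset.sum_range_succ, Nat.factorial] at hb
      have hmul : (1 - z) * Real.exp (z + z^2/4) ≤ 1 := by
        have hb2 := mul_le_mul_of_nonneg_left hb hpos.le
        nlinarith [hb2, sq_nonneg z, hgt.le, sq_nonneg (z*z), sq_nonneg (z - 1/4)]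
      rw [Real.exp_neg]
      have h3 := mul_le_mul_of_nonneg_right hmul
        (inv_nonneg.2 (Real.exp_pos (z + z^2/4)).le)
      rwa [mul_assoc, mul_inv_cancel₀ (Real.exp_pos (z + z^2/4)).ne', mul_one, one_mul] at h3
  have h4 := Real.log_le_log hpos key
  rw [Real.log_exp] at h4
  linarith

lemma aux_mono18 {γ α u : ℝ} (hγ : 0 < γ) (hγα : γ ≤ α) (hαu : α * u < 1) :
    (1/α) * Real.log (1 - α*u) ≤ (1/γ) * Real.log (1 - γ*u) := by
  have hα : 0 < α := lt_of_lt_of_le hγ hγα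
  have hc := strictConcaveOn_log_Ioi.concaveOn.2 (Set.mem_Ioi.2 one_pos)
    (Set.mem_Ioi.2 (by linarith : (0:ℝ) < 1 - α*u))
    (sub_nonneg.2 ((div_le_one hα).2 hγα)) (le_of_lt (div_pos hγ hα)) (by ring)
  have harg : (1 - γ/α) • (1:ℝ) + (γ/α) • (1 - α*u) = 1 - γ*u := by
    simp only [smul_eq_mul]
    rw [mul_sub, ← mul_assoc, div_mul_cancel₀ γ hα.ne']
    ring
  rw [harg] at hc
  simp only [smul_eq_mul, Real.log_one, mul_zero, zero_add] at hc
  have e1 : γ/α * Real.log (1 - α*u) = γ * ((1/α) * Real.log (1 - α*u)) := by ring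
  have e2 : Real.log (1 - γ*u) = γ * ((1/γ) * Real.log (1 - γ*u)) := by
    field_simp
  rw [e1, e2] at hc
  exact le_of_mul_le_mul_left hc hγ

lemma aux_t18 {c1 c2 : ℝ} (h : ∀ t : ℝ, 0 < t → t ≤ 1 → 0 ≤ c1 * t + c2 * t^2) :
    0 ≤ c1 := by
  by_contra hc
  push_neg at hc
  set M := max c2 0 with hM
  have hM0 : 0 ≤ M := le_max_right _ _
  have hMc : c2 ≤ M := le_max_left _ _
  have ht0 : 0 < min 1 (-c1/(2*(M+1))) :=
    lt_min one_pos (div_pos (by linarith) (by linarith))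
  have ht1 : min 1 (-c1/(2*(M+1))) ≤ 1 := min_le_left _ _
  have ht2 : min 1 (-c1/(2*(M+1))) ≤ -c1/(2*(M+1)) := min_le_right _ _
  have hh := h _ ht0 ht1
  set t := min 1 (-c1/(2*(M+1))) with ht
  have hMt : M * t ≤ -c1/2 := by
    have h5 : (M+1) * t ≤ -c1/2 := by
      have h6 := mul_le_mul_of_nonneg_left ht2 (by linarith : (0:ℝ) ≤ M+1)
      calc (M+1)*t ≤ (M+1) * (-c1/(2*(M+1))) := h6
        _ = -c1/2 := by field_simp
    nlinarith [ht0]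
  linarith [hh, mul_le_mul_of_nonneg_right hMc (sq_nonneg t),
    mul_le_mul_of_nonneg_right hMt ht0.le, mul_neg_of_neg_of_pos hc ht0]

open scoped RealInnerProductSpace

lemma aux_fo18 {d : ℕ} {X : Set (EuclideanSpace ℝ (Fin d))}
    {h : EuclideanSpace ℝ (Fin d) → ℝ} {gh xt : EuclideanSpace ℝ (Fin d)}
    (hc : ConcaveOn ℝ X h) (hxt : xt ∈ X) (hg : HasGradientAt h gh xt) :
    ∀ x ∈ X, h x ≤ h xt + ⟪gh, x - xt⟫ := by
  intro x hx
  have hline : HasDerivAt (fun t : ℝ => h (xt + t • (x - xt))) ⟪gh, x - xt⟫ 0 := by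
    have h1 : HasDerivAt (fun t : ℝ => xt + t • (x - xt)) (x - xt) 0 := by
      simpa using ((hasDerivAt_id (0:ℝ)).smul_const (x - xt)).const_add xt
    have h2 : HasFDerivAt h (InnerProductSpace.toDual ℝ _ gh) (xt + (0:ℝ) • (x - xt)) := by
      simpa using hasGradientAt_iff_hasFDerivAt.1 hg
    exact h2.comp_hasDerivAt 0 h1
  have htend : Filter.Tendsto (slope (fun t : ℝ => h (xt + t • (x - xt))) 0)
      (nhdsWithin 0 (Set.Ioi 0)) (nhds ⟪gh, x - xt⟫) :=
    (hasDerivAt_iff_tendsto_slope.1 hline).mono_left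
      (nhdsWithin_mono _ (fun t ht => ne_of_gt ht))
  have hev : ∀ᶠ t in nhdsWithin (0:ℝ) (Set.Ioi 0),
      h x - h xt ≤ slope (fun t : ℝ => h (xt + t • (x - xt))) 0 t := by
    filter_upwards [Ioc_mem_nhdsGT_of_mem (Set.mem_Ico.2 ⟨le_refl 0, zero_lt_one⟩)]
      with t ht
    have hcc := hc.2 hxt hx (by linarith [ht.2] : (0:ℝ) ≤ 1 - t) ht.1.le (by ring)
    have hpt : (1 - t) • xt + t • x = xt + t • (x - xt) := by
      rw [smul_sub, sub_smul, one_smul]; abel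
    rw [hpt] at hcc
    simp only [smul_eq_mul] at hcc
    rw [slope_def_field]
    have h0 : h (xt + (0:ℝ) • (x - xt)) = h xt := by norm_num
    rw [sub_zero, h0, le_div_iff₀ ht.1]
    nlinarith [hcc]
  have hfin := ge_of_tendsto htend hev
  linarith

set_option maxHeartbeats 1000000 in
/-- Single-step exp-concave descent inequality: let `f` be
`α`-exp-concave and differentiable on a convex set `X` with gradient bound `G`
and diameter bound `D`, let `A` be symmetric positive definite,
`A' = A + ∇f(xᵗ)∇f(xᵗ)ᵀ`, and let `x^{t+1}` minimize
`x ↦ ⟨x - xᵗ, ∇f(xᵗ)⟩ + (η/2)⟨x - xᵗ, A'(x - xᵗ)⟩` over `X`, where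
`η = ½·min{1/(4GD), α}`. Then for all `x ∈ X`,
`f(xᵗ) - f(x) ≤ (η/2)⟨xᵗ-x, A(xᵗ-x)⟩ - (η/2)⟨x^{t+1}-x, A'(x^{t+1}-x)⟩
  + (1/(2η))⟨∇f(xᵗ), A'⁻¹∇f(xᵗ)⟩`. -/
theorem stmt_18 {d : ℕ} (X : Set (EuclideanSpace ℝ (Fin d))) (hX : Convex ℝ X)
    (f : EuclideanSpace ℝ (Fin d) → ℝ)
    (grad : EuclideanSpace ℝ (Fin d) → EuclideanSpace ℝ (Fin d))
    (hgrad : ∀ x ∈ X, HasGradientAt f (grad x) x)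
    (α G D : ℝ) (hα : 0 < α) (hG : 0 < G) (hD : 0 < D)
    (hGbound : ∀ x ∈ X, ‖grad x‖ ≤ G)
    (hDbound : ∀ x ∈ X, ∀ x' ∈ X, ‖x - x'‖ ≤ D)
    (hec : ConcaveOn ℝ X fun x => Real.exp (-α * f x))
    (xt xt1 : EuclideanSpace ℝ (Fin d)) (hxt : xt ∈ X) (hxt1 : xt1 ∈ X)
    (A A' Ainv : EuclideanSpace ℝ (Fin d) →L[ℝ] EuclideanSpace ℝ (Fin d))
    (hAsym : ∀ z w, ⟪A z, w⟫ = ⟪z, A w⟫)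
    (hApos : ∀ z, z ≠ 0 → 0 < ⟪z, A z⟫)
    (hA' : ∀ z, A' z = A z + ⟪grad xt, z⟫ • grad xt)
    (hAinv : ∀ z, Ainv (A' z) = z)
    (η : ℝ) (hη : η = 1 / 2 * min (1 / (4 * G * D)) α)
    (hmin : IsMinOn
      (fun x => ⟪x - xt, grad xt⟫ + η / 2 * ⟪x - xt, A' (x - xt)⟫) X xt1) :
    ∀ x ∈ X,
      f xt - f x ≤ η / 2 * ⟪xt - x, A (xt - x)⟫ - η / 2 * ⟪xt1 - x, A' (xt1 - x)⟫
        + 1 / (2 * η) * ⟪grad xt, Ainv (grad xt)⟫ := by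
  intro x hx
  set g := grad xt with hgdef
  set γ := min (1 / (4 * G * D)) α with hγdef
  have hγ0 : 0 < γ := lt_min (by positivity) hα
  have hγα : γ ≤ α := min_le_right _ _
  have hγGD : γ ≤ 1 / (4 * G * D) := min_le_left _ _
  have hηγ : η = 1 / 2 * γ := hη
  have hη0 : 0 < η := by rw [hηγ]; linarith
  -- symmetry of A'
  have hA'sym : ∀ z w, ⟪z, A' w⟫ = ⟪w, A' z⟫ := by
    intro z w
    rw [hA', hA', inner_add_right, inner_add_right, real_inner_smul_right,
      real_inner_smul_right]
    have c1 : ⟪w, A z⟫ = ⟪z, A w⟫ := by rw [real_inner_comm, hAsym]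
    have c2 : ⟪w, g⟫ = ⟪g, w⟫ := real_inner_comm _ _
    have c3 : ⟪z, g⟫ = ⟪g, z⟫ := real_inner_comm _ _
    linear_combination -c1 + ⟪g, w⟫ * c3 - ⟪g, z⟫ * c2
  have hquad : ∀ p q : EuclideanSpace ℝ (Fin d),
      ⟪p + q, A' (p + q)⟫ = ⟪p, A' p⟫ + 2 * ⟪q, A' p⟫ + ⟪q, A' q⟫ := by
    intro p q
    rw [map_add, inner_add_left, inner_add_right, inner_add_right, hA'sym p q]
    ring
  -- STEP 1 : exp-concavity lower bound
  set u := ⟪g, x - xt⟫ with hudef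
  have hfd : HasFDerivAt f (InnerProductSpace.toDual ℝ _ g) xt := hgrad xt hxt
  have hcf : HasFDerivAt (fun y => -α * f y)
      ((-α) • InnerProductSpace.toDual ℝ _ g) xt := hfd.const_mul (-α)
  have hcomp : HasFDerivAt (fun y => Real.exp (-α * f y))
      (Real.exp (-α * f xt) • ((-α) • InnerProductSpace.toDual ℝ _ g)) xt :=
    hcf.exp
  have hgradexp : HasGradientAt (fun y => Real.exp (-α * f y))
      ((Real.exp (-α * f xt) * (-α)) • g) xt := by
    rw [hasGradientAt_iff_hasFDerivAt, map_smul]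
    rwa [smul_smul] at hcomp
  have hfo := aux_fo18 hec hxt hgradexp x hx
  rw [real_inner_smul_left] at hfo
  have hE : 0 < Real.exp (-α * f xt) := Real.exp_pos _
  have hEx : 0 < Real.exp (-α * f x) := Real.exp_pos _
  have h1αu : α * u < 1 := by
    by_contra hcon
    push_neg at hcon
    have h7 : Real.exp (-α * f xt) * 1 ≤ Real.exp (-α * f xt) * (α * u) :=
      mul_le_mul_of_nonneg_left hcon hE.le
    nlinarith [hfo, hEx]
  have hstep1a : f xt - f x ≤ 1 / α * Real.log (1 - α * u) := by
    have h2 : Real.exp (-α * f x) ≤ Real.exp (-α * f xt + Real.log (1 - α * u)) := by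
      rw [Real.exp_add, Real.exp_log (by linarith)]
      nlinarith [hfo]
    have h3 := Real.exp_le_exp.1 h2
    have h4 : α * (f xt - f x) ≤ Real.log (1 - α * u) := by linarith
    calc f xt - f x = 1 / α * (α * (f xt - f x)) := by field_simp
      _ ≤ 1 / α * Real.log (1 - α * u) :=
        mul_le_mul_of_nonneg_left h4 (by positivity)
  have hu : |u| ≤ G * D := by
    calc |u| ≤ ‖g‖ * ‖x - xt‖ := abs_real_inner_le_norm _ _
      _ ≤ G * D := mul_le_mul (hGbound xt hxt) (hDbound x hx xt hxt)
        (norm_nonneg _) hG.le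
  have hγu4 : |γ * u| ≤ 1 / 4 := by
    rw [abs_mul, abs_of_pos hγ0]
    calc γ * |u| ≤ 1 / (4 * G * D) * (G * D) :=
        mul_le_mul hγGD hu (abs_nonneg _) (by positivity)
      _ = 1 / 4 := by field_simp
  have hmono := aux_mono18 hγ0 hγα h1αu
  have hlg := aux_log18 hγu4
  have hstep1b : 1 / γ * Real.log (1 - γ * u) ≤ -u - γ * u ^ 2 / 4 := by
    have h5 : Real.log (1 - γ * u) ≤ -(γ * u + (γ * u) ^ 2 / 4) := by linarith
    have h6 := mul_le_mul_of_nonneg_left h5 (by positivity : (0:ℝ) ≤ 1 / γ)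
    calc 1 / γ * Real.log (1 - γ * u) ≤ 1 / γ * -(γ * u + (γ * u) ^ 2 / 4) := h6
      _ = -u - γ * u ^ 2 / 4 := by field_simp; ring
  have hstep1 : f xt - f x ≤ -u - γ * u ^ 2 / 4 := by linarith
  -- STEP 2 : first-order optimality
  have hopt : 0 ≤ ⟪x - xt1, g⟫ + η * ⟪x - xt1, A' (xt1 - xt)⟫ := by
    refine aux_t18 (c2 := η / 2 * ⟪x - xt1, A' (x - xt1)⟫) (fun t ht0 ht1 => ?_)
    have hmem : xt1 + t • (x - xt1) ∈ X := by
      have h8 := hX hxt1 hx (by linarith : (0:ℝ) ≤ 1 - t) ht0.le (by ring)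
      rwa [show (1 - t) • xt1 + t • x = xt1 + t • (x - xt1) from by
        rw [smul_sub, sub_smul, one_smul]; abel] at h8
    have hF := isMinOn_iff.1 hmin _ hmem
    have e1 : (xt1 + t • (x - xt1)) - xt = (xt1 - xt) + t • (x - xt1) := by abel
    have e2 : ⟪(xt1 - xt) + t • (x - xt1), g⟫
        = ⟪xt1 - xt, g⟫ + t * ⟪x - xt1, g⟫ := by
      rw [inner_add_left, real_inner_smul_left]
    have e3 : ⟪(xt1 - xt) + t • (x - xt1), A' ((xt1 - xt) + t • (x - xt1))⟫
        = ⟪xt1 - xt, A' (xt1 - xt)⟫ + 2 * (t * ⟪x - xt1, A' (xt1 - xt)⟫)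
          + t * (t * ⟪x - xt1, A' (x - xt1)⟫) := by
      rw [hquad, real_inner_smul_left, map_smul, real_inner_smul_left,
        real_inner_smul_right]
    rw [e1, e2, e3] at hF
    linarith [hF]
  -- surjectivity / inverse
  obtain ⟨z₀, hz₀⟩ : ∃ z₀, A' z₀ = g := by
    have hinj : Function.Injective A'.toLinearMap := by
      intro a b hab
      have h9 : A' (a - b) = 0 := by
        simp only [map_sub]
        simpa [sub_eq_zero] using hab
      by_contra hne
      have h10 : a - b ≠ 0 := sub_ne_zero.2 hne
      have h11 := hApos _ h10
      have h12 : ⟪a - b, A' (a - b)⟫ = 0 := by rw [h9, inner_zero_right]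
      rw [hA', inner_add_right, real_inner_smul_right,
        real_inner_comm (a - b) g] at h12
      nlinarith [mul_self_nonneg ⟪g, a - b⟫]
    exact (LinearMap.injective_iff_surjective.1 hinj) g |>.imp fun z₀ h => h
  have hAinvg : Ainv g = z₀ := by rw [← hz₀, hAinv]
  have hA'psd : ∀ p : EuclideanSpace ℝ (Fin d), 0 ≤ ⟪p, A' p⟫ := by
    intro p
    rcases eq_or_ne p 0 with h | h
    · simp [h]
    · have h1 := hApos p h
      rw [hA', inner_add_right, real_inner_smul_right, real_inner_comm p g]
      nlinarith [mul_self_nonneg ⟪g, p⟫]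
  -- the quadratic completion inequality (iv)
  have hiv : 0 ≤ η / 2 * ⟪xt1 - xt, A' (xt1 - xt)⟫ + ⟪xt1 - xt, g⟫
      + 1 / (2 * η) * ⟪g, Ainv g⟫ := by
    have hp := hA'psd ((xt1 - xt) + (1 / η) • z₀)
    rw [hquad] at hp
    have q1 : ⟪(1 / η) • z₀, A' (xt1 - xt)⟫ = (1 / η) * ⟪xt1 - xt, g⟫ := by
      rw [real_inner_smul_left, hA'sym z₀ (xt1 - xt), hz₀]
    have q2 : ⟪(1 / η) • z₀, A' ((1 / η) • z₀)⟫
        = (1 / η) * ((1 / η) * ⟪z₀, g⟫) := by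
      rw [real_inner_smul_left, map_smul, real_inner_smul_right, hz₀]
    rw [q1, q2] at hp
    have hc : ⟪g, Ainv g⟫ = ⟪z₀, g⟫ := by rw [hAinvg, real_inner_comm]
    rw [hc]
    have h13 := mul_le_mul_of_nonneg_left hp (le_of_lt (by positivity : (0:ℝ) < η / 2))
    have heq : η / 2 * (⟪xt1 - xt, A' (xt1 - xt)⟫ + 2 * ((1 / η) * ⟪xt1 - xt, g⟫)
          + (1 / η) * ((1 / η) * ⟪z₀, g⟫))
        = η / 2 * ⟪xt1 - xt, A' (xt1 - xt)⟫ + ⟪xt1 - xt, g⟫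
          + 1 / (2 * η) * ⟪z₀, g⟫ := by
      field_simp
    rw [mul_zero] at h13
    linarith [h13, heq.ge, heq.le]
  -- final assembly
  have n1 : ⟪xt - x, A (xt - x)⟫ = ⟪x - xt, A (x - xt)⟫ := by
    rw [show xt - x = -(x - xt) from by abel, map_neg, inner_neg_neg]
  have n2 : ⟪xt1 - x, A' (xt1 - x)⟫ = ⟪x - xt1, A' (x - xt1)⟫ := by
    rw [show xt1 - x = -(x - xt1) from by abel, map_neg, inner_neg_neg]
  have hud : u = ⟪x - xt1, g⟫ + ⟪xt1 - xt, g⟫ := by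
    rw [hudef, real_inner_comm, show x - xt = (x - xt1) + (xt1 - xt) from by abel,
      inner_add_left]
  have h3p : ⟪x - xt, A' (x - xt)⟫ = ⟪xt1 - xt, A' (xt1 - xt)⟫
      + 2 * ⟪x - xt1, A' (xt1 - xt)⟫ + ⟪x - xt1, A' (x - xt1)⟫ := by
    rw [show x - xt = (xt1 - xt) + (x - xt1) from by abel, hquad]
  have hAA' : ⟪x - xt, A' (x - xt)⟫ = ⟪x - xt, A (x - xt)⟫ + u ^ 2 := by
    have hc2 : ⟪x - xt, g⟫ = u := by rw [hudef]; exact real_inner_comm _ _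
    rw [hA', inner_add_right, real_inner_smul_right, hc2, ← hudef]
    ring
  have h3pη : η * ⟪x - xt1, A' (xt1 - xt)⟫
      = η / 2 * ⟪x - xt, A' (x - xt)⟫ - η / 2 * ⟪xt1 - xt, A' (xt1 - xt)⟫
        - η / 2 * ⟪x - xt1, A' (x - xt1)⟫ := by
    linear_combination (-(η / 2)) * h3p
  have hAAη : η / 2 * ⟪x - xt, A' (x - xt)⟫
      = η / 2 * ⟪x - xt, A (x - xt)⟫ + η / 2 * u ^ 2 := by
    linear_combination (η / 2) * hAA'
  have hu2 : η / 2 * u ^ 2 = γ / 4 * u ^ 2 := by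
    linear_combination (u ^ 2 / 2) * hηγ
  rw [n1, n2]
  linarith [hstep1, hopt, hiv, h3pη, hAAη, hu2, hud]
end
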